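/- arXiv:math/0411093 — 2 statements merged into one kernel-verified Lean document; each statement's English description precedes it below -/
import Mathlib

section
/- There exists a non-regular 4-simplex in Euclidean 4-space whose centroid, circumcenter, incenter, and Fermat-Torricelli point all coincide. -/
/-
Common geometric notions for simplices in Euclidean d-space, following
Edmonds–Hajja–Martini, "Coincidences of simplex centers and related facial
structures".  A d-simplex is given by its d+1 affinely independent vertices
`A : Fin (d+1) → EuclideanSpace ℝ (Fin d)`.
-/

noncomputable section

abbrev Pt (d : ℕ) : Type := EuclideanSpace ℝ (Fin d)

variable {d : ℕ}

/-- The centroid of the simplex with vertices `A`: the average of the vertices. -/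
def ctr (A : Fin (d+1) → Pt d) : Pt d := Finset.centroid ℝ Finset.univ A

/-- `C` is a circumcenter of the simplex with vertices `A`:
it is equidistant from all the vertices. -/
def IsCircumcenter (A : Fin (d+1) → Pt d) (C : Pt d) : Prop :=
  ∃ r : ℝ, ∀ i, dist C (A i) = r

/-- The affine span (hyperplane) of the facet opposite to vertex `j`. -/
def facetSpan (A : Fin (d+1) → Pt d) (j : Fin (d+1)) : Set (Pt d) :=
  (affineSpan ℝ (A '' {i | i ≠ j}) : Set (Pt d))

/-- `I` is the incenter of the simplex with vertices `A`: an interior point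
equidistant from the affine hyperplanes spanned by the facets. -/
def IsIncenter (A : Fin (d+1) → Pt d) (I : Pt d) : Prop :=
  I ∈ interior (convexHull ℝ (Set.range A)) ∧
    ∃ r : ℝ, ∀ j, Metric.infDist I (facetSpan A j) = r

/-- `F` is a Fermat-Torricelli point of the simplex with vertices `A`:
it minimizes the sum of the distances to the vertices. -/
def IsFermatPoint (A : Fin (d+1) → Pt d) (F : Pt d) : Prop :=
  ∀ Q : Pt d, ∑ i, dist F (A i) ≤ ∑ i, dist Q (A i)

/-- The altitude of the simplex at vertex `j`: the distance from `A j` to the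
affine span of the opposite facet. -/
def altitude (A : Fin (d+1) → Pt d) (j : Fin (d+1)) : ℝ :=
  Metric.infDist (A j) (facetSpan A j)

/-- Equiareal: all facets have the same `(d-1)`-dimensional volume; equivalently
(since `d · vol S = facet volume · altitude`), all altitudes are equal. -/
def Equiareal (A : Fin (d+1) → Pt d) : Prop :=
  ∀ j k, altitude A j = altitude A k

/-- `r` is the circumradius of the facet opposite `j`: some point of the affine
span of the facet is at distance `r` from all its vertices. -/
def IsFacetCircumradius (A : Fin (d+1) → Pt d) (j : Fin (d+1)) (r : ℝ) : Prop :=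
  ∃ C ∈ affineSpan ℝ (A '' {i | i ≠ j}), ∀ i, i ≠ j → dist C (A i) = r

/-- Equiradial: all facets have the same circumradius. -/
def Equiradial (A : Fin (d+1) → Pt d) : Prop :=
  ∃ r : ℝ, ∀ j, IsFacetCircumradius A j r

/-- Equifacetal: any two facets are congruent, i.e. there is an isometry of the
ambient space carrying the vertex set of one facet onto that of the other. -/
def Equifacetal (A : Fin (d+1) → Pt d) : Prop :=
  ∀ j k, ∃ f : Pt d ≃ᵢ Pt d, f '' (A '' {i | i ≠ j}) = A '' {i | i ≠ k}

/-- Regular: all edges have equal length. -/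
def Regular (A : Fin (d+1) → Pt d) : Prop :=
  ∀ i j k l, i ≠ j → k ≠ l → dist (A i) (A j) = dist (A k) (A l)

/-
The vertices are the points `t = 2πk/5` (`k = 0, …, 4`) of the curve
`t ↦ (cos t, sin t, 2 cos 2t, 2 sin 2t)` (with `1` instead of `2` the simplex would be regular).
Rotating by `θ = 2π/5` in the first coordinate plane and by `2θ` in the second is a linear isometry
that permutes the vertices cyclically. Such an isometry fixes the centroid, and as it acts
transitively on the vertices and on the facets, the centroid is equidistant from all vertices and
from all facet hyperplanes. Finally, a circumcenter `P` that is also the centroid is a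
Fermat-Torricelli point: the vectors `Aᵢ - P` have equal length `R` and sum to zero, so
`R ∑ |Q - Aᵢ| ≥ ∑ ⟪Aᵢ - Q, Aᵢ - P⟫ = ∑ R² = R ∑ |P - Aᵢ|`.
-/

open Real Finset Metric

theorem Fin.apply_eq_apply_zero_of_apply_add_one {α : Type*} {n : ℕ} (g : Fin (n + 1) → α)
    (h : ∀ i, g (i + 1) = g i) (i : Fin (n + 1)) : g i = g 0 := by
  induction i using Fin.induction with
  | zero => rfl
  | succ i ih => rw [← Fin.coeSucc_eq_succ, h, ih]

theorem ctr_eq_smul_sum (A : Fin (d + 1) → Pt d) : ctr A = ((d + 1 : ℕ) : ℝ)⁻¹ • ∑ i, A i := by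
  rw [ctr, centroid_def, affineCombination_eq_linear_combination _ _ _
    (sum_centroidWeights_eq_one_of_card_eq_add_one ℝ (n := d) _ (by simp))]
  simp [centroidWeights_apply, smul_sum]

theorem sum_sub_ctr (A : Fin (d + 1) → Pt d) : ∑ i, (A i - ctr A) = 0 := by
  rw [sum_sub_distrib, ctr_eq_smul_sum, sum_const, card_univ, Fintype.card_fin,
    ← Nat.cast_smul_eq_nsmul ℝ, smul_smul, mul_inv_cancel₀ (by positivity), one_smul, sub_self]

theorem ctr_mem_interior_convexHull {A : Fin (d + 1) → Pt d} (hA : AffineIndependent ℝ A) :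
    ctr A ∈ interior (convexHull ℝ (Set.range A)) :=
  (AffineBasis.mk A hA (hA.affineSpan_eq_top_iff_card_eq_finrank_add_one.2 (by simp)))
    |>.centroid_mem_interior_convexHull

theorem map_ctr_of_cyclic {A : Fin (d + 1) → Pt d} (f : Pt d →ᵃ[ℝ] Pt d)
    (hf : ∀ i, f (A i) = A (i + 1)) : f (ctr A) = ctr A := by
  have hfA : f ∘ A = A ∘ Equiv.addRight 1 := funext hf
  rw [ctr, centroid_def, map_affineCombination _ _ _
    (sum_centroidWeights_eq_one_of_card_eq_add_one ℝ (n := d) _ (by simp)), ← centroid_def, hfA,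
    ← (Equiv.addRight (1 : Fin (d + 1))).coe_toEmbedding, ← centroid_map, map_univ_equiv, centroid_def]

theorem image_facetSpan_of_cyclic {A : Fin (d + 1) → Pt d} (f : Pt d →ᵃ[ℝ] Pt d)
    (hf : ∀ i, f (A i) = A (i + 1)) (j : Fin (d + 1)) :
    f '' facetSpan A j = facetSpan A (j + 1) := by
  have hvert : f '' (A '' {i | i ≠ j}) = A '' {i | i ≠ j + 1} := by
    rw [Set.image_image, funext hf, ← Set.image_image (g := A), Set.image_add_right]
    congr 1
    ext i
    simp [← sub_eq_add_neg, sub_eq_iff_eq_add]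
  rw [facetSpan, ← AffineSubspace.coe_map, AffineSubspace.map_span, hvert, facetSpan]

theorem infDist_facetSpan_add_one_of_cyclic {A : Fin (d + 1) → Pt d} (f : Pt d →ᵃⁱ[ℝ] Pt d)
    (hf : ∀ i, f (A i) = A (i + 1)) {P : Pt d} (hP : f P = P) (j : Fin (d + 1)) :
    infDist P (facetSpan A (j + 1)) = infDist P (facetSpan A j) := by
  rw [← image_facetSpan_of_cyclic f.toAffineMap hf]
  conv_lhs => rw [← hP]
  exact infDist_image f.isometry

theorem isCircumcenter_ctr_of_cyclic {A : Fin (d + 1) → Pt d} (f : Pt d →ᵃⁱ[ℝ] Pt d)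
    (hf : ∀ i, f (A i) = A (i + 1)) : IsCircumcenter A (ctr A) := by
  have hc : f (ctr A) = ctr A := map_ctr_of_cyclic f.toAffineMap hf
  refine ⟨_, Fin.apply_eq_apply_zero_of_apply_add_one (fun i => dist (ctr A) (A i)) fun i => ?_⟩
  calc dist (ctr A) (A (i + 1)) = dist (f (ctr A)) (f (A i)) := by rw [hf, hc]
    _ = dist (ctr A) (A i) := f.dist_map _ _

theorem isIncenter_ctr_of_cyclic {A : Fin (d + 1) → Pt d} (hA : AffineIndependent ℝ A)
    (f : Pt d →ᵃⁱ[ℝ] Pt d) (hf : ∀ i, f (A i) = A (i + 1)) : IsIncenter A (ctr A) :=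
  ⟨ctr_mem_interior_convexHull hA, _, Fin.apply_eq_apply_zero_of_apply_add_one _
    (infDist_facetSpan_add_one_of_cyclic f hf (map_ctr_of_cyclic f.toAffineMap hf))⟩

theorem sum_dist_le_sum_dist_of_sum_sub_eq_zero {E ι : Type*} [NormedAddCommGroup E]
    [InnerProductSpace ℝ E] (s : Finset ι) (A : ι → E) {P : E} {R : ℝ}
    (hR : ∀ i ∈ s, dist P (A i) = R) (hsum : ∑ i ∈ s, (A i - P) = 0) (Q : E) :
    ∑ i ∈ s, dist P (A i) ≤ ∑ i ∈ s, dist Q (A i) := by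
  have key : ∀ i ∈ s, R * R + inner ℝ (P - Q) (A i - P) ≤ R * dist Q (A i) := by
    intro i hi
    have hnorm : ‖A i - P‖ = R := by rw [← dist_eq_norm', hR i hi]
    calc R * R + inner ℝ (P - Q) (A i - P) = inner ℝ ((A i - P) + (P - Q)) (A i - P) := by
          rw [inner_add_left, real_inner_self_eq_norm_mul_norm, hnorm]
      _ ≤ ‖(A i - P) + (P - Q)‖ * ‖A i - P‖ := real_inner_le_norm _ _
      _ = R * dist Q (A i) := by rw [sub_add_sub_cancel, hnorm, mul_comm, dist_eq_norm']
  have hRsum := sum_le_sum key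
  rw [sum_add_distrib, ← inner_sum, hsum, inner_zero_right, add_zero, ← mul_sum, ← mul_sum]
    at hRsum
  rw [sum_congr rfl hR]
  rcases s.eq_empty_or_nonempty with rfl | ⟨i, hi⟩
  · simp
  rcases (hR i hi ▸ dist_nonneg : 0 ≤ R).eq_or_lt with rfl | hRpos
  · simpa using sum_nonneg fun j _ => dist_nonneg
  · exact le_of_mul_le_mul_left hRsum hRpos

theorem isFermatPoint_ctr {A : Fin (d + 1) → Pt d} (h : IsCircumcenter A (ctr A)) :
    IsFermatPoint A (ctr A) := fun Q =>
  let ⟨_, hR⟩ := h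
  sum_dist_le_sum_dist_of_sum_sub_eq_zero univ A (fun i _ => hR i) (sum_sub_ctr A) Q

theorem ctr_isCircumcenter_isIncenter_isFermatPoint_of_cyclic {A : Fin (d + 1) → Pt d}
    (hA : AffineIndependent ℝ A) (f : Pt d →ᵃⁱ[ℝ] Pt d) (hf : ∀ i, f (A i) = A (i + 1)) :
    IsCircumcenter A (ctr A) ∧ IsIncenter A (ctr A) ∧ IsFermatPoint A (ctr A) :=
  have hcirc := isCircumcenter_ctr_of_cyclic f hf
  ⟨hcirc, isIncenter_ctr_of_cyclic hA f hf, isFermatPoint_ctr hcirc⟩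

namespace CyclicSimplex

def θ : ℝ := 2 * π / 5

def curve (t : ℝ) : Pt 4 := !₂[cos t, sin t, 2 * cos (2 * t), 2 * sin (2 * t)]

def vertices (i : Fin 5) : Pt 4 := curve ((i : ℕ) * θ)

def rotation (α : ℝ) : Pt 4 →ₗᵢ[ℝ] Pt 4 where
  toFun x := !₂[cos α * x 0 - sin α * x 1, sin α * x 0 + cos α * x 1,
    cos (2 * α) * x 2 - sin (2 * α) * x 3, sin (2 * α) * x 2 + cos (2 * α) * x 3]
  map_add' x y := by ext i; fin_cases i <;> simp <;> ring
  map_smul' c x := by ext i; fin_cases i <;> simp <;> ring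
  norm_map' x := by
    rw [← sq_eq_sq₀ (norm_nonneg _) (norm_nonneg _), EuclideanSpace.real_norm_sq_eq,
      EuclideanSpace.real_norm_sq_eq]
    simp only [LinearMap.coe_mk, AddHom.coe_mk, Fin.sum_univ_four, Matrix.cons_val_zero,
      Matrix.cons_val_one, Matrix.cons_val, Fin.isValue]
    linear_combination (x 0 ^ 2 + x 1 ^ 2) * sin_sq_add_cos_sq α +
      (x 2 ^ 2 + x 3 ^ 2) * sin_sq_add_cos_sq (2 * α)

theorem rotation_curve (α t : ℝ) : rotation α (curve t) = curve (t + α) := by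
  ext i
  fin_cases i <;>
    simp only [rotation, curve, LinearIsometry.coe_mk, LinearMap.coe_mk, AddHom.coe_mk,
      Matrix.cons_val_zero, Matrix.cons_val_one, Matrix.cons_val, Fin.zero_eta, Fin.mk_one,
      Fin.reduceFinMk, Fin.isValue, cos_add, sin_add, mul_add] <;>
    ring

theorem curve_add_two_pi (t : ℝ) : curve (t + 2 * π) = curve t := by
  have h₁ := cos_add_nat_mul_two_pi (2 * t) 2
  have h₂ := sin_add_nat_mul_two_pi (2 * t) 2
  push_cast at h₁ h₂
  simp [curve, mul_add, h₁, h₂]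

theorem rotation_vertices (i : Fin 5) : rotation θ (vertices i) = vertices (i + 1) := by
  rw [vertices, vertices, rotation_curve, Fin.val_add_one]
  split_ifs with h
  · subst h
    rw [show ((Fin.last 4 : ℕ) : ℝ) * θ + θ = 0 + 2 * π by simp [θ]; ring, curve_add_two_pi]
    simp
  · push_cast
    ring_nf

theorem curve_two_pi_sub (t : ℝ) :
    curve (2 * π - t) = !₂[cos t, -sin t, 2 * cos (2 * t), -(2 * sin (2 * t))] := by
  have h₁ := cos_nat_mul_two_pi_sub (2 * t) 2
  have h₂ := sin_nat_mul_two_pi_sub (2 * t) 2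
  push_cast at h₁ h₂
  simp [curve, mul_sub, h₁, h₂]

theorem vertices_eq : vertices = ![!₂[1, 0, 2, 0],
    !₂[cos θ, sin θ, 2 * cos (2 * θ), 2 * sin (2 * θ)],
    !₂[cos (2 * θ), sin (2 * θ), 2 * cos θ, -(2 * sin θ)],
    !₂[cos (2 * θ), -sin (2 * θ), 2 * cos θ, 2 * sin θ],
    !₂[cos θ, -sin θ, 2 * cos (2 * θ), -(2 * sin (2 * θ))]] := by
  have h₂₂ : 2 * (2 * θ) = 2 * π - θ := by rw [θ]; ring
  have h₁ : cos (2 * (2 * θ)) = cos θ := by rw [h₂₂, cos_two_pi_sub]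
  have h₂ : sin (2 * (2 * θ)) = -sin θ := by rw [h₂₂, sin_two_pi_sub]
  funext i
  fin_cases i
  · simp [vertices, curve]
  · simp [vertices, curve]
  · simp [vertices, curve, h₁, h₂]
  · have h₃ : 3 * θ = 2 * π - 2 * θ := by rw [θ]; ring
    simp [vertices, h₃, curve_two_pi_sub, h₁, h₂]
  · have h₄ : 4 * θ = 2 * π - θ := by rw [θ]; ring
    simp [vertices, h₄, curve_two_pi_sub]

theorem cos_θ_pos : 0 < cos θ :=
  cos_pos_of_mem_Ioo ⟨by rw [θ]; linarith [pi_pos], by rw [θ]; linarith [pi_pos]⟩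

theorem sin_θ_pos : 0 < sin θ :=
  sin_pos_of_pos_of_lt_pi (by rw [θ]; positivity) (by rw [θ]; linarith [pi_pos])

theorem cos_two_mul_θ_neg : cos (2 * θ) < 0 :=
  cos_neg_of_pi_div_two_lt_of_lt (by rw [θ]; linarith [pi_pos]) (by rw [θ]; linarith [pi_pos])

theorem not_regular_vertices : ¬ Regular vertices := by
  intro h
  have hsq : dist (vertices 0) (vertices 1) ^ 2 = dist (vertices 0) (vertices 2) ^ 2 := by
    rw [h 0 1 0 2 (by decide) (by decide)]
  rw [EuclideanSpace.dist_sq_eq, EuclideanSpace.dist_sq_eq, vertices_eq] at hsq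
  simp only [Fin.sum_univ_four, Real.dist_eq, sq_abs, Matrix.cons_val_zero, Matrix.cons_val_one,
    Matrix.cons_val, Fin.isValue, Nat.succ_eq_add_one, Nat.reduceAdd, zero_sub, even_two,
    Even.neg_pow, sub_neg_eq_add, zero_add] at hsq
  have hcos : cos θ = cos (2 * θ) := by
    linear_combination (1 / 6 : ℝ) * hsq + (1 / 2 : ℝ) * sin_sq_add_cos_sq θ -
      (1 / 2 : ℝ) * sin_sq_add_cos_sq (2 * θ)
  linarith [cos_θ_pos, cos_two_mul_θ_neg]

theorem affineIndependent_vertices : AffineIndependent ℝ vertices := by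
  rw [affineIndependent_iff_of_fintype]
  intro w hw₀ hw
  rw [Finset.weightedVSub_eq_linear_combination _ hw₀, vertices_eq, Fin.sum_univ_five] at hw
  rw [Fin.sum_univ_five] at hw₀
  have E₀ := congrArg (fun v : Pt 4 => v 0) hw
  have E₁ := congrArg (fun v : Pt 4 => v 1) hw
  have E₂ := congrArg (fun v : Pt 4 => v 2) hw
  have E₃ := congrArg (fun v : Pt 4 => v 3) hw
  simp only [PiLp.add_apply, PiLp.smul_apply, PiLp.zero_apply, smul_eq_mul, Matrix.cons_val_zero,
    Matrix.cons_val_one, Matrix.cons_val, Fin.isValue, Nat.succ_eq_add_one, Nat.reduceAdd, mul_one,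
    mul_zero, zero_add, mul_neg] at E₀ E₁ E₂ E₃
  have hsin : sin θ ^ 2 + sin (2 * θ) ^ 2 ≠ 0 := by positivity [sin_θ_pos.ne']
  have hcos : cos θ - cos (2 * θ) ≠ 0 := by linarith [cos_θ_pos, cos_two_mul_θ_neg]
  have hcos' : 4 - 2 * cos θ - 2 * cos (2 * θ) ≠ 0 := by
    linarith [cos_le_one θ, cos_two_mul_θ_neg]
  have h₁₄ : w 1 = w 4 := by
    have h : (sin θ ^ 2 + sin (2 * θ) ^ 2) * (w 1 - w 4) = 0 := by
      linear_combination sin θ * E₁ + (sin (2 * θ) / 2) * E₃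
    exact sub_eq_zero.1 ((mul_eq_zero.1 h).resolve_left hsin)
  have h₂₃ : w 2 = w 3 := by
    have h : (sin θ ^ 2 + sin (2 * θ) ^ 2) * (w 2 - w 3) = 0 := by
      linear_combination sin (2 * θ) * E₁ - (sin θ / 2) * E₃
    exact sub_eq_zero.1 ((mul_eq_zero.1 h).resolve_left hsin)
  have h₁₂ : w 1 = w 2 := by
    have h : (cos θ - cos (2 * θ)) * (w 1 + w 4 - w 2 - w 3) = 0 := by
      linear_combination E₀ - E₂ / 2
    linarith [(mul_eq_zero.1 h).resolve_left hcos]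
  have h₁ : w 1 = 0 := by
    have h : (4 - 2 * cos θ - 2 * cos (2 * θ)) * w 1 = 0 := by
      linear_combination hw₀ - E₀ + (1 - cos θ) * h₁₄ + (1 - cos (2 * θ)) * h₁₂ +
        (1 - cos (2 * θ)) * (h₁₂.trans h₂₃)
    exact (mul_eq_zero.1 h).resolve_left hcos'
  intro i
  fin_cases i <;> simp <;> linarith

end CyclicSimplex

/-- Corollary 4.2. There is a non-regular 4-simplex whose
centroid, circumcenter, incenter and Fermat-Torricelli point all coincide. -/
theorem statement12 :
    ∃ A : Fin 5 → Pt 4, AffineIndependent ℝ A ∧ ¬ Regular A ∧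
      ∃ P : Pt 4, P = ctr A ∧ IsCircumcenter A P ∧ IsIncenter A P ∧
        IsFermatPoint A P := by
  open CyclicSimplex in
  exact ⟨vertices, affineIndependent_vertices, not_regular_vertices, _, rfl,
    ctr_isCircumcenter_isIncenter_isFermatPoint_of_cyclic affineIndependent_vertices
      (rotation θ).toAffineIsometry rotation_vertices⟩
end
end

section
/- There exists a 4-simplex in Euclidean 4-space that is both equiareal (all five facets have equal 3-dimensional volume) and equiradial (all five facets have equal circumradius) but is not equifacetal (not all facets are congruent). -/
/-
Common geometric notions for simplices in Euclidean d-space, following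
Edmonds–Hajja–Martini, "Coincidences of simplex centers and related facial
structures".  A d-simplex is given by its d+1 affinely independent vertices
`A : Fin (d+1) → EuclideanSpace ℝ (Fin d)`.
-/

noncomputable section

variable {d : ℕ}

open scoped RealInnerProductSpace

/-!
The simplex has base vertices `(±1, 0, u, 0)`, `(0, ±1, -u, 0)` in the hyperplane `x₃ = 0` and
apex `(0, 0, 0, ω)`. The sign change of `x₀` and the map `(x₀, x₁, x₂, x₃) ↦ (x₁, x₀, -x₂, x₃)`
are isometries permuting the vertices, transitively on the four lateral facets, so only the base
and one lateral facet need to be examined. The base has circumcentre the origin, circumradius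
`√(1 + u²)` and altitude `ω` over it; asking the same of a lateral facet gives two equations,
solved by `u = (√6 - 2) / 2` and `ω² = (21 - 6√6) / 10`. The simplex is not equifacetal: every
edge of the base has squared length greater than `2`, every lateral edge `1 + u² + ω² < 2`.
-/

theorem sum_smul_mem_affineSpan {ι V : Type*} [Fintype ι] [AddCommGroup V] [Module ℝ V]
    {S : Set V} {p : ι → V} {w : ι → ℝ} (hw : ∑ i, w i = 1) (hp : ∀ i, w i ≠ 0 → p i ∈ S) :
    ∑ i, w i • p i ∈ affineSpan ℝ S := by
  obtain ⟨k, -, hk⟩ := Finset.exists_ne_zero_of_sum_ne_zero (hw ▸ one_ne_zero : ∑ i, w i ≠ 0)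
  have hpk := mem_affineSpan ℝ (hp k hk)
  have hdir : ∑ i, w i • p i -ᵥ p k ∈ (affineSpan ℝ S).direction := by
    have hsum : ∑ i, w i • p i - p k = ∑ i, w i • (p i - p k) := by
      simp [smul_sub, Finset.sum_sub_distrib, ← Finset.sum_smul, hw]
    rw [vsub_eq_sub, hsum]
    refine Submodule.sum_mem _ fun i _ => ?_
    by_cases hi : w i = 0
    · simp [hi]
    · exact Submodule.smul_mem _ _
        (AffineSubspace.vsub_mem_direction (mem_affineSpan ℝ (hp i hi)) hpk)
  simpa using AffineSubspace.vadd_mem_of_mem_direction hdir hpk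

theorem infDist_affineSpan_eq_dist {E : Type*} [NormedAddCommGroup E] [InnerProductSpace ℝ E]
    {S : Set E} {p q : E} (hq : q ∈ affineSpan ℝ S) (h : ∀ x ∈ S, ⟪p - q, x - q⟫ = 0) :
    Metric.infDist p (affineSpan ℝ S : Set E) = dist p q := by
  have hperp : affineSpan ℝ S ≤ AffineSubspace.mk' q (ℝ ∙ (p - q))ᗮ :=
    affineSpan_le.mpr fun x hx => by
      simpa [AffineSubspace.mem_mk', Submodule.mem_orthogonal_singleton_iff_inner_right]
        using h x hx
  refine le_antisymm (Metric.infDist_le_dist_of_mem hq) ?_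
  rw [Metric.infDist_eq_iInf]
  have : Nonempty (affineSpan ℝ S : Set E) := ⟨⟨q, hq⟩⟩
  refine le_ciInf fun ⟨y, hy⟩ => ?_
  have hpy : ⟪p - q, y - q⟫ = 0 := by
    simpa [AffineSubspace.mem_mk', Submodule.mem_orthogonal_singleton_iff_inner_right]
      using hperp hy
  have pythagoras := (norm_sub_sq_eq_norm_sq_add_norm_sq_iff_real_inner_eq_zero _ _).mpr hpy
  rw [sub_sub_sub_cancel_right] at pythagoras
  rw [dist_eq_norm, dist_eq_norm]
  nlinarith [norm_nonneg (p - q), norm_nonneg (p - y), norm_nonneg (y - q)]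

theorem IsometryEquiv.pairwise_image {α β : Type*} [PseudoMetricSpace α] [PseudoMetricSpace β]
    (f : α ≃ᵢ β) {S : Set α} {P : ℝ → Prop} (h : S.Pairwise fun x y => P (dist x y)) :
    (f '' S).Pairwise fun x y => P (dist x y) := by
  rintro _ ⟨x, hx, rfl⟩ _ ⟨y, hy, rfl⟩ hne
  rw [f.dist_eq]
  exact h hx hy fun h => hne (h ▸ rfl)

section Facets

variable {d : ℕ} {A : Fin (d+1) → Pt d}

theorem sum_smul_mem_facetSpan {j : Fin (d+1)} {w : Fin (d+1) → ℝ} (hw : ∑ i, w i = 1)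
    (hj : w j = 0) : ∑ i, w i • A i ∈ facetSpan A j :=
  sum_smul_mem_affineSpan hw fun i hi => ⟨i, fun h => hi (h ▸ hj), rfl⟩

theorem altitude_eq_dist {j : Fin (d+1)} {q : Pt d} (hq : q ∈ facetSpan A j)
    (h : ∀ i ≠ j, ⟪A j - q, A i - q⟫ = 0) : altitude A j = dist (A j) q :=
  infDist_affineSpan_eq_dist hq (by rintro _ ⟨i, hi, rfl⟩; exact h i hi)

variable (f : Pt d ≃ᵢ Pt d) (σ : Equiv.Perm (Fin (d+1)))

theorem facetSpan_perm (hf : ∀ i, f (A i) = A (σ i)) (j : Fin (d+1)) :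
    facetSpan A (σ j) = f '' facetSpan A j := by
  have himg : A '' {i | i ≠ σ j} = f '' (A '' {i | i ≠ j}) := by
    ext x
    simp only [Set.mem_image, Set.mem_ofPred_eq, exists_exists_and_eq_and, hf]
    constructor
    · rintro ⟨i, hi, rfl⟩
      exact ⟨σ.symm i, fun h => hi (by simp [← h]), by simp⟩
    · rintro ⟨i, hi, rfl⟩
      exact ⟨σ i, σ.injective.ne hi, rfl⟩
  have hmap := AffineSubspace.map_span
    (f.toRealAffineIsometryEquiv.toAffineEquiv : Pt d →ᵃ[ℝ] Pt d) (A '' {i | i ≠ j})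
  simp only [AffineEquiv.coe_toAffineMap, AffineIsometryEquiv.coe_toAffineEquiv,
    IsometryEquiv.coeFn_toRealAffineIsometryEquiv] at hmap
  rw [facetSpan, facetSpan, himg, ← hmap, AffineSubspace.coe_map]
  rfl

theorem altitude_perm (hf : ∀ i, f (A i) = A (σ i)) (j : Fin (d+1)) :
    altitude A (σ j) = altitude A j := by
  rw [altitude, facetSpan_perm f σ hf, ← hf, Metric.infDist_image f.isometry, altitude]

theorem IsFacetCircumradius.perm (hf : ∀ i, f (A i) = A (σ i)) {j : Fin (d+1)} {r : ℝ}
    (h : IsFacetCircumradius A j r) : IsFacetCircumradius A (σ j) r := by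
  obtain ⟨C, hC, hdist⟩ := h
  refine ⟨f C, ?_, fun i hi => ?_⟩
  · show f C ∈ facetSpan A (σ j)
    exact facetSpan_perm f σ hf j ▸ Set.mem_image_of_mem f hC
  · obtain ⟨k, rfl⟩ := σ.surjective i
    rw [← hf, f.dist_eq]
    exact hdist k fun h => hi (h ▸ rfl)

end Facets

namespace DevideSimplex

theorem inner_eq_coords (x y : Pt 4) :
    ⟪x, y⟫ = x 0 * y 0 + x 1 * y 1 + x 2 * y 2 + x 3 * y 3 := by
  simp [PiLp.inner_apply, Fin.sum_univ_four, mul_comm]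

theorem dist_sq_eq_coords (x y : Pt 4) :
    dist x y ^ 2 = (x 0 - y 0) ^ 2 + (x 1 - y 1) ^ 2 + (x 2 - y 2) ^ 2 + (x 3 - y 3) ^ 2 := by
  rw [EuclideanSpace.dist_eq, Real.sq_sqrt (by positivity)]
  simp [Fin.sum_univ_four, Real.dist_eq, sq_abs]

theorem dist_eq_of_coords {x y : Pt 4} {r : ℝ} (hr : 0 ≤ r)
    (h : (x 0 - y 0) ^ 2 + (x 1 - y 1) ^ 2 + (x 2 - y 2) ^ 2 + (x 3 - y 3) ^ 2 = r ^ 2) :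
    dist x y = r := by
  rw [← sq_eq_sq₀ dist_nonneg hr, dist_sq_eq_coords, h]

theorem sqrt_six_sq : √6 ^ 2 = 6 := Real.sq_sqrt (by norm_num)

theorem nine_div_four_lt_sqrt_six : 9 / 4 < √6 := by
  rw [Real.lt_sqrt (by norm_num)]; norm_num

theorem sqrt_six_lt_three : √6 < 3 := by
  rw [Real.sqrt_lt' (by norm_num)]; norm_num

def u : ℝ := (√6 - 2) / 2

def ω : ℝ := √((21 - 6 * √6) / 10)

theorem u_pos : 0 < u := by
  rw [u]; linarith [nine_div_four_lt_sqrt_six]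

theorem ω_sq : ω ^ 2 = (21 - 6 * √6) / 10 := Real.sq_sqrt (by linarith [sqrt_six_lt_three])

theorem ω_pos : 0 < ω := Real.sqrt_pos.mpr (by linarith [sqrt_six_lt_three])

def A : Fin 5 → Pt 4 :=
  ![!₂[1, 0, u, 0], !₂[-1, 0, u, 0], !₂[0, 1, -u, 0], !₂[0, -1, -u, 0], !₂[0, 0, 0, ω]]

theorem affineIndependent_A : AffineIndependent ℝ A := by
  rw [affineIndependent_iff_of_fintype]
  intro w hw hws i
  rw [Finset.weightedVSub_eq_linear_combination _ hw] at hws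
  have hc (k : Fin 4) : (∑ i, w i • A i) k = 0 := by rw [hws]; rfl
  have h0 := hc 0; have h1 := hc 1; have h2 := hc 2; have h3 := hc 3
  simp only [A, Fin.sum_univ_five, Matrix.cons_val_zero, Matrix.cons_val_one, Matrix.cons_val,
    PiLp.add_apply, PiLp.smul_apply, smul_eq_mul, mul_one, mul_neg, mul_zero,
    add_zero, zero_add, mul_eq_zero] at h0 h1 h2 h3 hw
  have h2' : w 0 + w 1 - w 2 - w 3 = 0 := by
    have : (w 0 + w 1 - w 2 - w 3) * u = 0 := by linear_combination h2
    exact (mul_eq_zero.mp this).resolve_right u_pos.ne'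
  have h4 : w 4 = 0 := h3.resolve_right ω_pos.ne'
  fin_cases i <;> simp only [Fin.zero_eta, Fin.mk_one, Fin.reduceFinMk] <;> linarith

def negX : Pt 4 ≃ᵢ Pt 4 :=
  IsometryEquiv.mk' (fun x => !₂[-x 0, x 1, x 2, x 3]) (fun x => !₂[-x 0, x 1, x 2, x 3])
    (fun x => by ext k; fin_cases k <;> simp)
    (Isometry.of_dist_eq fun x y => by
      rw [← sq_eq_sq₀ dist_nonneg dist_nonneg, dist_sq_eq_coords, dist_sq_eq_coords]
      simp only [Matrix.cons_val_zero, Matrix.cons_val_one, Matrix.cons_val]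
      ring)

def swapXY : Pt 4 ≃ᵢ Pt 4 :=
  IsometryEquiv.mk' (fun x => !₂[x 1, x 0, -x 2, x 3]) (fun x => !₂[x 1, x 0, -x 2, x 3])
    (fun x => by ext k; fin_cases k <;> simp)
    (Isometry.of_dist_eq fun x y => by
      rw [← sq_eq_sq₀ dist_nonneg dist_nonneg, dist_sq_eq_coords, dist_sq_eq_coords]
      simp only [Matrix.cons_val_zero, Matrix.cons_val_one, Matrix.cons_val]
      ring)

theorem negX_apply (x : Pt 4) : negX x = !₂[-x 0, x 1, x 2, x 3] := rfl

theorem swapXY_apply (x : Pt 4) : swapXY x = !₂[x 1, x 0, -x 2, x 3] := rfl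

theorem negX_A (i : Fin 5) : negX (A i) = A (Equiv.swap 0 1 i) := by
  fin_cases i <;> ext k <;> fin_cases k <;> simp [negX_apply, A, Equiv.swap_apply_of_ne_of_ne]

theorem swapXY_A (i : Fin 5) :
    swapXY (A i) = A ((Equiv.swap 0 2 * Equiv.swap 1 3 : Equiv.Perm (Fin 5)) i) := by
  fin_cases i <;> ext k <;> fin_cases k <;> simp [swapXY_apply, A, Equiv.swap_apply_of_ne_of_ne]

theorem forall_of_invariant {P : Fin 5 → Prop} (h : ∀ j, P j → P (Equiv.swap 0 1 j))
    (h' : ∀ j, P j → P ((Equiv.swap 0 2 * Equiv.swap 1 3 : Equiv.Perm (Fin 5)) j))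
    (h0 : P 0) (h4 : P 4) : ∀ j, P j := by
  have h1 : P 1 := by simpa using h 0 h0
  intro j
  fin_cases j
  · exact h0
  · exact h1
  · exact h' 0 h0
  · exact h' 1 h1
  · exact h4

theorem zero_mem_facetSpan_four : (0 : Pt 4) ∈ facetSpan A 4 := by
  have hcentroid : ∑ i, ![(1 / 4 : ℝ), 1 / 4, 1 / 4, 1 / 4, 0] i • A i = 0 := by
    ext k; fin_cases k <;> simp [A, Fin.sum_univ_five]
  rw [← hcentroid]
  exact sum_smul_mem_facetSpan (by simp [Fin.sum_univ_five]; norm_num) (by rfl)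

def foot0 : Pt 4 :=
  ∑ i, ![0, (1 - 6 * √6) / 20, (7 + 3 * √6) / 20, (7 + 3 * √6) / 20, 1 / 4] i • A i

def circumcenter0 : Pt 4 :=
  ∑ i, ![0, (7 - 2 * √6) / 20, (9 + √6) / 20, (9 + √6) / 20, -1 / 4] i • A i

theorem foot0_mem : foot0 ∈ facetSpan A 0 := by
  unfold foot0
  exact sum_smul_mem_facetSpan (by simp [Fin.sum_univ_five]; ring) (by rfl)

theorem circumcenter0_mem : circumcenter0 ∈ facetSpan A 0 := by
  unfold circumcenter0
  exact sum_smul_mem_facetSpan (by simp [Fin.sum_univ_five]; ring) (by rfl)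

theorem altitude_A_zero : altitude A 0 = ω := by
  rw [altitude_eq_dist foot0_mem]
  · refine dist_eq_of_coords ω_pos.le ?_
    simp only [foot0, A, u, Fin.sum_univ_five, Matrix.cons_val_zero, Matrix.cons_val_one,
      Matrix.cons_val, PiLp.add_apply, PiLp.smul_apply, PiLp.toLp_apply, smul_eq_mul]
    grind [sqrt_six_sq, ω_sq]
  · intro i hi
    fin_cases i
    · exact absurd rfl hi
    all_goals
      simp only [inner_eq_coords, foot0, A, u, Fin.sum_univ_five, Fin.mk_one, Fin.reduceFinMk,
        Matrix.cons_val_zero, Matrix.cons_val_one, Matrix.cons_val, PiLp.add_apply,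
        PiLp.sub_apply, PiLp.smul_apply, smul_eq_mul]
      grind [sqrt_six_sq, ω_sq]

theorem altitude_A_four : altitude A 4 = ω := by
  rw [altitude_eq_dist zero_mem_facetSpan_four]
  · refine dist_eq_of_coords ω_pos.le ?_
    simp [A]
  · intro i hi
    fin_cases i
    all_goals first
      | exact absurd rfl hi
      | simp [inner_eq_coords, A]

theorem altitude_A (j : Fin 5) : altitude A j = ω := by
  refine forall_of_invariant (P := fun j => altitude A j = ω) (fun j h => ?_) (fun j h => ?_)
    altitude_A_zero altitude_A_four j
  · rwa [altitude_perm negX _ negX_A]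
  · rwa [altitude_perm swapXY _ swapXY_A]

theorem isFacetCircumradius_A (j : Fin 5) : IsFacetCircumradius A j (√(1 + u ^ 2)) := by
  refine forall_of_invariant (P := fun j => IsFacetCircumradius A j (√(1 + u ^ 2)))
    (fun j => IsFacetCircumradius.perm negX _ negX_A)
    (fun j => IsFacetCircumradius.perm swapXY _ swapXY_A) ?_ ?_ j
  · refine ⟨circumcenter0, circumcenter0_mem, fun i hi => ?_⟩
    refine dist_eq_of_coords (Real.sqrt_nonneg _) ?_
    rw [Real.sq_sqrt (by positivity)]
    fin_cases i
    · exact absurd rfl hi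
    all_goals
      simp only [circumcenter0, A, u, Fin.sum_univ_five, Fin.mk_one, Fin.reduceFinMk,
        Matrix.cons_val_zero, Matrix.cons_val_one, Matrix.cons_val, PiLp.add_apply,
        PiLp.smul_apply, PiLp.toLp_apply, smul_eq_mul]
      grind [sqrt_six_sq, ω_sq]
  · refine ⟨0, zero_mem_facetSpan_four, fun i hi => ?_⟩
    refine dist_eq_of_coords (Real.sqrt_nonneg _) ?_
    rw [Real.sq_sqrt (by positivity)]
    fin_cases i
    all_goals first
      | exact absurd rfl hi
      | simp [A]

theorem pairwise_two_lt_dist_sq_facet_four :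
    (A '' {i | i ≠ 4}).Pairwise fun x y => 2 < dist x y ^ 2 := by
  rintro _ ⟨i, hi, rfl⟩ _ ⟨k, hk, rfl⟩ hne
  rw [dist_sq_eq_coords]
  fin_cases i <;> fin_cases k <;> simp [A] at hi hk hne ⊢ <;> nlinarith [u_pos]

theorem dist_sq_A_one_four_lt_two : dist (A 1) (A 4) ^ 2 < 2 := by
  rw [dist_sq_eq_coords]
  simp only [A, u, Matrix.cons_val_zero, Matrix.cons_val_one, Matrix.cons_val, PiLp.toLp_apply]
  nlinarith [sqrt_six_sq, ω_sq, nine_div_four_lt_sqrt_six]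

theorem not_equifacetal_A : ¬ Equifacetal A := by
  intro h
  obtain ⟨f, hf⟩ := h 4 0
  have hpair := hf ▸ f.pairwise_image (P := fun r => 2 < r ^ 2) pairwise_two_lt_dist_sq_facet_four
  have := hpair ⟨1, by decide, rfl⟩ ⟨4, by decide, rfl⟩ (affineIndependent_A.injective.ne (by decide))
  linarith [dist_sq_A_one_four_lt_two]

end DevideSimplex

/-- answer to Devidé's question. There is a 4-simplex which
is both equiareal and equiradial but not equifacetal. -/
theorem statement17 :
    ∃ A : Fin 5 → Pt 4, AffineIndependent ℝ A ∧ Equiareal A ∧ Equiradial A ∧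
      ¬ Equifacetal A :=
  ⟨DevideSimplex.A, DevideSimplex.affineIndependent_A,
    fun j k => by rw [DevideSimplex.altitude_A, DevideSimplex.altitude_A],
    ⟨_, DevideSimplex.isFacetCircumradius_A⟩, DevideSimplex.not_equifacetal_A⟩
end
end
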